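/- (Black) For every n ≥ 1, the set of all single-peaked linear orders on X_n with respect to the natural axis 1 < 2 < … < n is a Condorcet domain of cardinality 2^{n-1}. -/

import Mathlib

/-- A vote (strict linear order) on the set of alternatives `Fin n`, encoded as
the permutation sending each position (`0` = top) to the alternative placed in
that position. -/
abbrev Vote (n : ℕ) := Equiv.Perm (Fin n)

/-- `v` ranks `a` above `b`. -/
def Above {n : ℕ} (v : Vote n) (a b : Fin n) : Prop := v.symm a < v.symm b

instance {n : ℕ} (v : Vote n) (a b : Fin n) : Decidable (Above v a b) :=
  inferInstanceAs (Decidable (v.symm a < v.symm b))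

/-- The majority relation of a list of votes: `a` is ranked above `b` iff more
than half of the votes rank `a` above `b`. -/
def Maj {n : ℕ} (l : List (Vote n)) (a b : Fin n) : Prop :=
  l.length < 2 * l.countP (fun v => decide (Above v a b))

/-- A Condorcet domain: for every odd-length list of votes from `D` the
majority relation is a strict linear order on the alternatives. -/
def IsCondorcet {n : ℕ} (D : Set (Vote n)) : Prop :=
  ∀ l : List (Vote n), Odd l.length → (∀ v ∈ l, v ∈ D) →
    IsStrictTotalOrder (Fin n) (Maj l)

/-- The position (`0` = top) of `x` in the restriction of `v` to the triple
`{a, b, c}`: the number of elements of the triple ranked above `x` by `v`. -/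
def posIn {n : ℕ} (v : Vote n) (a b c x : Fin n) : ℕ :=
  (({a, b, c} : Finset (Fin n)).filter (fun y => Above v y x)).card

/-- The `i`-th smallest element of the triple `a < b < c` (`i : Fin 3`,
0-indexed). -/
def tElem {n : ℕ} (a b c : Fin n) (i : Fin 3) : Fin n :=
  if i = 0 then a else if i = 1 then b else c

/-- The vote `v` satisfies the never condition `iNj` on the triple `a < b < c`
(`i j : Fin 3`, both 0-indexed): the `i`-th smallest element of the triple is
not in the `j`-th position (from the top) of the restriction of `v` to the
triple. -/
def VNever {n : ℕ} (v : Vote n) (a b c : Fin n) (i j : Fin 3) : Prop :=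
  posIn v a b c (tElem a b c i) ≠ (j : ℕ)

/-- The domain `D` satisfies the never condition `iNj` on the triple
`a < b < c` if every vote in `D` does. -/
def DNever {n : ℕ} (D : Set (Vote n)) (a b c : Fin n) (i j : Fin 3) : Prop :=
  ∀ v ∈ D, VNever v a b c i j

/-- A pair (triple, never condition): the triple is `a < b < c` and the
condition is `iNj` (0-indexed). -/
structure NC (n : ℕ) where
  a : Fin n
  b : Fin n
  c : Fin n
  i : Fin 3
  j : Fin 3

/-- The pair is valid: its alternatives do form a triple `a < b < c`. -/
def NC.valid {n : ℕ} (p : NC n) : Prop := p.a < p.b ∧ p.b < p.c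

/-- The vote `v` satisfies the never condition of the pair `p` on its triple. -/
def NC.holdsFor {n : ℕ} (p : NC n) (v : Vote n) : Prop :=
  VNever v p.a p.b p.c p.i p.j

/-- `N(D)`: the set of all pairs (triple, never condition) satisfied by `D`. -/
def NSet {n : ℕ} (D : Set (Vote n)) : Set (NC n) :=
  {p | p.valid ∧ DNever D p.a p.b p.c p.i p.j}

/-- `D` is full: it contains every vote that satisfies, for every pair in
`N(D)`, the corresponding never condition. -/
def IsFull {n : ℕ} (D : Set (Vote n)) : Prop :=
  ∀ v : Vote n, (∀ p ∈ NSet D, p.holdsFor v) → v ∈ D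

/-- `D` is a maximal Condorcet domain: it is a Condorcet domain and no
Condorcet domain strictly contains it. -/
def IsMaximalCD {n : ℕ} (D : Set (Vote n)) : Prop :=
  IsCondorcet D ∧ ∀ D' : Set (Vote n), IsCondorcet D' → ¬ D ⊂ D'

/-- A set `S` of (triple, never condition) pairs implies the never condition
`iNj` on the triple `a < b < c`: every vote satisfying all the conditions in
`S` satisfies `iNj` on this triple. -/
def Implies {n : ℕ} (S : Set (NC n)) (a b c : Fin n) (i j : Fin 3) : Prop :=
  ∀ v : Vote n, (∀ p ∈ S, p.holdsFor v) → VNever v a b c i j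

/-- `N(D)_T`: the set of pairs in `N(D)` whose triple differs from the triple
`(a, b, c)`. -/
def NSetOff {n : ℕ} (D : Set (Vote n)) (a b c : Fin n) : Set (NC n) :=
  {p ∈ NSet D | (p.a, p.b, p.c) ≠ (a, b, c)}

/-- The action of a bijection `π` of the alternatives on a vote: `π(v)` ranks
`x` above `y` iff `v` ranks `π⁻¹ x` above `π⁻¹ y`.  In our encoding this is
the composition `π * v`. -/
def pVote {n : ℕ} (π : Equiv.Perm (Fin n)) (v : Vote n) : Vote n := π * v

/-- `π(D) = {π(v) : v ∈ D}`. -/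
def pDom {n : ℕ} (π : Equiv.Perm (Fin n)) (D : Set (Vote n)) : Set (Vote n) :=
  pVote π '' D

/-- The standard order `α = 1 2 … n` (alternative `k` in position `k`). -/
def stdOrder (n : ℕ) : Vote n := 1

/-- `v` is single-peaked with respect to the natural axis `1 < 2 < … < n`:
letting `p` be the top-ranked alternative of `v`, alternatives below `p` on
the axis are ranked in increasing order and alternatives above `p` are ranked
in decreasing order. -/
def SinglePeaked {n : ℕ} (v : Vote n) : Prop :=
  ∃ p : Fin n, (∀ x : Fin n, x ≠ p → Above v p x) ∧
    (∀ a b : Fin n, a < b → b ≤ p → Above v b a) ∧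
    (∀ a b : Fin n, p ≤ a → a < b → Above v a b)

/-!
No single-peaked order ranks the middle alternative of a triple `a < b < c` last: it lies on the
same side of the peak as one of the other two and is preferred to it. Hence in any profile a
majority for `a` over `b` is also one for `a` over `c`, and a majority for `c` over `b` one for `c`
over `a`, which rules out majority cycles; with an odd number of voters the majority relation is
also complete.

A single-peaked order is determined by the set `A` of positions occupied by alternatives left of
the peak: the peak is `#A`, at the top, the alternatives smaller than it fill `A` in decreasing
order and the larger ones fill the remaining positions in increasing order. Every `A` not
containing the top position arises, which gives `2 ^ (n - 1)` orders.
-/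

open Finset

section Majority

variable {n : ℕ}

lemma above_asymm {v : Vote n} {a b : Fin n} (h : Above v a b) : ¬ Above v b a :=
  lt_asymm h

lemma above_trans {v : Vote n} {a b c : Fin n} (hab : Above v a b) (hbc : Above v b c) :
    Above v a c :=
  lt_trans hab hbc

lemma above_or_above (v : Vote n) {a b : Fin n} (h : a ≠ b) : Above v a b ∨ Above v b a :=
  lt_or_gt_of_ne (v.symm.injective.ne h)

lemma countP_above_add_countP_above (l : List (Vote n)) {a b : Fin n} (h : a ≠ b) :
    l.countP (fun v => decide (Above v a b)) + l.countP (fun v => decide (Above v b a)) =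
      l.length := by
  rw [List.length_eq_countP_add_countP (fun v => decide (Above v a b)) (l := l)]
  congr 1
  refine List.countP_congr fun v _ => ?_
  rcases above_or_above v h with hab | hba
  · simp [hab, above_asymm hab]
  · simp [hba, above_asymm hba]

lemma maj_irrefl (l : List (Vote n)) (a : Fin n) : ¬ Maj l a a := by
  simp [Maj, Above]

lemma maj_asymm {l : List (Vote n)} {a b : Fin n} (h : Maj l a b) : ¬ Maj l b a := by
  rcases eq_or_ne a b with rfl | hab
  · exact absurd h (maj_irrefl l a)
  · have := countP_above_add_countP_above l hab
    unfold Maj at *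
    omega

lemma maj_or_maj {l : List (Vote n)} (hl : Odd l.length) {a b : Fin n} (h : a ≠ b) :
    Maj l a b ∨ Maj l b a := by
  have := countP_above_add_countP_above l h
  obtain ⟨k, hk⟩ := hl
  unfold Maj
  omega

lemma Maj.mono {l : List (Vote n)} {a b c d : Fin n}
    (himp : ∀ v ∈ l, Above v a b → Above v c d) (h : Maj l a b) : Maj l c d :=
  h.trans_le (Nat.mul_le_mul_left 2 (List.countP_mono_left fun v hv hab => by
    simpa using himp v hv (by simpa using hab)))

end Majority

section ValueRestriction

variable {n : ℕ}

def MiddleNeverLast (v : Vote n) : Prop :=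
  ∀ ⦃a b c : Fin n⦄, a < b → b < c → ¬ (Above v a b ∧ Above v c b)

lemma MiddleNeverLast.above_of_above_left {v : Vote n} (hv : MiddleNeverLast v) {a b c : Fin n}
    (hab : a < b) (hbc : b < c) (h : Above v a b) : Above v a c :=
  (above_or_above v (hab.trans hbc).ne).resolve_right fun hca => hv hab hbc ⟨h, above_trans hca h⟩

lemma MiddleNeverLast.above_of_above_right {v : Vote n} (hv : MiddleNeverLast v) {a b c : Fin n}
    (hab : a < b) (hbc : b < c) (h : Above v c b) : Above v c a :=
  (above_or_above v (hab.trans hbc).ne').resolve_right fun hac => hv hab hbc ⟨above_trans hac h, h⟩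

lemma not_maj_cycle_of_le {l : List (Vote n)} (hl : ∀ v ∈ l, MiddleNeverLast v) {x y z : Fin n}
    (hxy : x ≤ y) (hxz : x ≤ z) (h₁ : Maj l x y) (h₂ : Maj l y z) (h₃ : Maj l z x) : False := by
  have hxy : x < y := hxy.lt_of_ne (by rintro rfl; exact maj_irrefl l x h₁)
  rcases lt_trichotomy y z with hyz | rfl | hzy
  · exact maj_asymm (h₁.mono fun v hv => (hl v hv).above_of_above_left hxy hyz) h₃
  · exact maj_irrefl l y h₂
  · have hxz : x < z := hxz.lt_of_ne (by rintro rfl; exact maj_irrefl l x h₃)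
    exact maj_asymm (h₂.mono fun v hv => (hl v hv).above_of_above_right hxz hzy) h₁

lemma not_maj_cycle {l : List (Vote n)} (hl : ∀ v ∈ l, MiddleNeverLast v) {x y z : Fin n}
    (h₁ : Maj l x y) (h₂ : Maj l y z) (h₃ : Maj l z x) : False := by
  rcases le_total x y with hxy | hyx
  · rcases le_total x z with hxz | hzx
    · exact not_maj_cycle_of_le hl hxy hxz h₁ h₂ h₃
    · exact not_maj_cycle_of_le hl hzx (hzx.trans hxy) h₃ h₁ h₂
  · rcases le_total y z with hyz | hzy
    · exact not_maj_cycle_of_le hl hyz hyx h₂ h₃ h₁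
    · exact not_maj_cycle_of_le hl (hzy.trans hyx) hzy h₃ h₁ h₂

theorem isCondorcet_of_middleNeverLast {D : Set (Vote n)}
    (hD : ∀ v ∈ D, MiddleNeverLast v) : IsCondorcet D := by
  intro l hl hlD
  have hmnl : ∀ v ∈ l, MiddleNeverLast v := fun v hv => hD v (hlD v hv)
  exact
    { trichotomous := fun a b hab hba => by_contra fun h => (maj_or_maj hl h).elim hab hba
      irrefl := maj_irrefl l
      trans := fun a b c hab hbc => by
        rcases eq_or_ne a c with rfl | hac
        · exact absurd hbc (maj_asymm hab)
        · exact (maj_or_maj hl hac).resolve_right (not_maj_cycle hmnl hab hbc) }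

end ValueRestriction

lemma SinglePeaked.middleNeverLast {n : ℕ} {v : Vote n} (hv : SinglePeaked v) :
    MiddleNeverLast v := by
  rintro a b c hab hbc ⟨hab', hcb'⟩
  obtain ⟨p, -, hleft, hright⟩ := hv
  rcases le_total b p with hbp | hpb
  · exact above_asymm (hleft a b hab hbp) hab'
  · exact above_asymm (hright b c hpb hbc) hcb'

lemma card_filter_le_lt_card_filter_le {α : Type*} [LinearOrder α] (s : Finset α) {i j : α}
    (hij : i < j) (hj : j ∈ s) : #{k ∈ s | k ≤ i} < #{k ∈ s | k ≤ j} :=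
  card_lt_card <| (ssubset_iff_of_subset (monotone_filter_right s fun _ _ hk => hk.trans hij.le)).2
    ⟨j, mem_filter.2 ⟨hj, le_rfl⟩, fun h => (mem_filter.1 h).2.not_gt hij⟩

lemma card_filter_le_mono {α : Type*} [LinearOrder α] (s : Finset α) {i j : α} (hij : i ≤ j) :
    #{k ∈ s | k ≤ i} ≤ #{k ∈ s | k ≤ j} :=
  card_le_card (monotone_filter_right s fun _ _ hk => hk.trans hij)

lemma eq_of_card_filter_le_eq {α : Type*} [LinearOrder α] {s : Finset α} {i j : α} (hi : i ∈ s)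
    (hj : j ∈ s) (h : #{k ∈ s | k ≤ i} = #{k ∈ s | k ≤ j}) : i = j := by
  rcases lt_trichotomy i j with hij | hij | hji
  · exact absurd h (card_filter_le_lt_card_filter_le s hij hj).ne
  · exact hij
  · exact absurd h (card_filter_le_lt_card_filter_le s hji hi).ne'

section Counting

variable {m : ℕ}

lemma singlePeaked_iff (v : Vote (m + 1)) :
    SinglePeaked v ↔ StrictAntiOn v.symm (Set.Iic (v 0)) ∧ StrictMonoOn v.symm (Set.Ici (v 0)) := by
  constructor
  · rintro ⟨p, htop, hleft, hright⟩
    obtain rfl : v 0 = p := by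
      by_contra h
      simpa [Above] using htop (v 0) h
    exact ⟨fun a _ b hb hab => hleft a b hab hb, fun a ha b _ hab => hright a b ha hab⟩
  · rintro ⟨hanti, hmono⟩
    refine ⟨v 0, fun x hx => ?_, fun a b hab hb => hanti (hab.le.trans hb) hb hab,
      fun a b ha hab => hmono ha (ha.trans hab.le) hab⟩
    simpa [Above, Fin.pos_iff_ne_zero, Equiv.symm_apply_eq] using hx

lemma singlePeaked_of_forall {v : Vote (m + 1)}
    (hanti : ∀ i j, v i < v j → v j ≤ v 0 → j < i) (hmono : ∀ i j, v 0 ≤ v i → v i < v j → i < j) :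
    SinglePeaked v :=
  (singlePeaked_iff v).2
    ⟨fun a _ b hb hab => hanti _ _ (by simpa using hab) (by simpa using hb),
      fun a ha b _ hab => hmono _ _ (by simpa using ha) (by simpa using hab)⟩

lemma SinglePeaked.le_iff_le_of_le_peak {v : Vote (m + 1)} (hv : SinglePeaked v) {i j : Fin (m + 1)}
    (hi : v i ≤ v 0) (hj : v j ≤ v 0) : i ≤ j ↔ v j ≤ v i := by
  simpa using ((singlePeaked_iff v).1 hv).1.le_iff_ge hi hj

lemma SinglePeaked.le_iff_le_of_peak_le {v : Vote (m + 1)} (hv : SinglePeaked v) {i j : Fin (m + 1)}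
    (hi : v 0 ≤ v i) (hj : v 0 ≤ v j) : i ≤ j ↔ v i ≤ v j := by
  simpa using ((singlePeaked_iff v).1 hv).2.le_iff_le hi hj

def leftSet (v : Vote (m + 1)) : Finset (Fin (m + 1)) := {i | v i < v 0}

lemma zero_notMem_leftSet (v : Vote (m + 1)) : 0 ∉ leftSet v := by
  simp [leftSet]

/-- The alternative at position `i` of the single-peaked order with peak `#A` whose alternatives
smaller than the peak occupy the positions in `A`. -/
def spValue (A : Finset (Fin (m + 1))) (i : Fin (m + 1)) : ℕ :=
  if i ∈ A then #A - #{j ∈ A | j ≤ i} else #A + #{j ∈ Aᶜ | j ≤ i} - 1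

variable {A : Finset (Fin (m + 1))}

lemma spValue_lt_card {i : Fin (m + 1)} (hi : i ∈ A) : spValue A i < #A := by
  have : 0 < #{j ∈ A | j ≤ i} := card_pos.2 ⟨i, by simp [hi]⟩
  have := card_filter_le A (· ≤ i)
  simp only [spValue, if_pos hi]
  omega

lemma one_le_card_compl_filter_le (h0 : 0 ∉ A) (i : Fin (m + 1)) : 1 ≤ #{j ∈ Aᶜ | j ≤ i} :=
  card_pos.2 ⟨0, by simp [h0]⟩

lemma card_le_spValue (h0 : 0 ∉ A) {i : Fin (m + 1)} (hi : i ∉ A) : #A ≤ spValue A i := by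
  have := one_le_card_compl_filter_le h0 i
  simp only [spValue, if_neg hi]
  omega

lemma spValue_lt (h0 : 0 ∉ A) (i : Fin (m + 1)) : spValue A i < m + 1 := by
  by_cases hi : i ∈ A
  · exact (spValue_lt_card hi).trans_le (card_le_univ A |>.trans_eq (Fintype.card_fin _))
  · have := card_filter_le Aᶜ (· ≤ i)
    have := card_compl A
    have := one_le_card_compl_filter_le h0 i
    simp only [spValue, if_neg hi, Fintype.card_fin] at *
    omega

lemma spValue_zero (h0 : 0 ∉ A) : spValue A 0 = #A := by
  have : #{j ∈ Aᶜ | j ≤ 0} = 1 := by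
    rw [card_eq_one]
    exact ⟨0, by ext j; simpa using fun hj : j = 0 => hj ▸ h0⟩
  simp only [spValue, if_neg h0, this, Nat.add_sub_cancel]

lemma spValue_le_card_iff (h0 : 0 ∉ A) {i : Fin (m + 1)} : spValue A i ≤ #A ↔ i ∈ A ∨ i = 0 := by
  refine ⟨fun h => ?_, ?_⟩
  · by_contra! hi
    have := card_filter_le_lt_card_filter_le Aᶜ (Fin.pos_iff_ne_zero.2 hi.2) (mem_compl.2 hi.1)
    have := one_le_card_compl_filter_le h0 0
    simp only [spValue, if_neg hi.1] at h
    omega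
  · rintro (hi | rfl)
    · exact (spValue_lt_card hi).le
    · exact (spValue_zero h0).le

lemma spValue_injective (h0 : 0 ∉ A) : Function.Injective (spValue A) := by
  intro i j h
  by_cases hi : i ∈ A <;> by_cases hj : j ∈ A
  · have := card_filter_le A (· ≤ i)
    have := card_filter_le A (· ≤ j)
    have : 0 < #{k ∈ A | k ≤ i} := card_pos.2 ⟨i, by simp [hi]⟩
    have : 0 < #{k ∈ A | k ≤ j} := card_pos.2 ⟨j, by simp [hj]⟩
    simp only [spValue, if_pos hi, if_pos hj] at h
    exact eq_of_card_filter_le_eq hi hj (by omega)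
  · exact absurd h ((spValue_lt_card hi).trans_le (card_le_spValue h0 hj)).ne
  · exact absurd h ((spValue_lt_card hj).trans_le (card_le_spValue h0 hi)).ne'
  · have := one_le_card_compl_filter_le h0 i
    have := one_le_card_compl_filter_le h0 j
    simp only [spValue, if_neg hi, if_neg hj] at h
    exact eq_of_card_filter_le_eq (mem_compl.2 hi) (mem_compl.2 hj) (by omega)

lemma lt_of_spValue_lt_of_le_card (h0 : 0 ∉ A) {i j : Fin (m + 1)}
    (hij : spValue A i < spValue A j) (hj : spValue A j ≤ #A) : j < i := by
  have hi : i ∈ A := by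
    by_contra hi
    have := card_le_spValue h0 hi
    omega
  rcases (spValue_le_card_iff h0).1 hj with hj' | rfl
  · by_contra! hji
    have := card_filter_le_mono A hji
    simp only [spValue, if_pos hi, if_pos hj'] at hij
    omega
  · exact Fin.pos_iff_ne_zero.2 (ne_of_mem_of_not_mem hi h0)

lemma lt_of_spValue_lt_of_card_le {i j : Fin (m + 1)}
    (hi : #A ≤ spValue A i) (hij : spValue A i < spValue A j) : i < j := by
  have hi' : i ∉ A := fun h => (spValue_lt_card h).not_ge hi
  have hj' : j ∉ A := fun h => (spValue_lt_card h).not_ge (hi.trans hij.le)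
  by_contra! hji
  have := card_filter_le_mono Aᶜ hji
  simp only [spValue, if_neg hi', if_neg hj'] at hij
  omega

noncomputable def spVote (A : {A : Finset (Fin (m + 1)) // 0 ∉ A}) : Vote (m + 1) :=
  Equiv.ofBijective (fun i => ⟨spValue A i, spValue_lt A.2 i⟩) <|
    Finite.injective_iff_bijective.1 fun _ _ h => spValue_injective A.2 (Fin.val_eq_of_eq h)

lemma spVote_apply_val (A : {A : Finset (Fin (m + 1)) // 0 ∉ A}) (i : Fin (m + 1)) :
    (spVote A i : ℕ) = spValue A i :=
  rfl

lemma singlePeaked_spVote (A : {A : Finset (Fin (m + 1)) // 0 ∉ A}) : SinglePeaked (spVote A) := by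
  have hpeak : (spVote A 0 : ℕ) = #A.1 := spValue_zero A.2
  refine singlePeaked_of_forall (fun i j hij hj => ?_) (fun i j hi hij => ?_)
  · rw [Fin.lt_def, spVote_apply_val, spVote_apply_val] at hij
    rw [Fin.le_def, hpeak, spVote_apply_val] at hj
    exact lt_of_spValue_lt_of_le_card A.2 hij hj
  · rw [Fin.lt_def, spVote_apply_val, spVote_apply_val] at hij
    rw [Fin.le_def, hpeak, spVote_apply_val] at hi
    exact lt_of_spValue_lt_of_card_le hi hij

lemma leftSet_spVote (A : {A : Finset (Fin (m + 1)) // 0 ∉ A}) : leftSet (spVote A) = A.1 := by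
  ext i
  rw [leftSet, mem_filter, Fin.lt_def, spVote_apply_val, spVote_apply_val, spValue_zero A.2]
  refine ⟨fun h => ?_, fun h => ⟨mem_univ i, spValue_lt_card h⟩⟩
  by_contra hi
  exact (card_le_spValue A.2 hi).not_gt h.2

lemma card_leftSet (v : Vote (m + 1)) : #(leftSet v) = v 0 := by
  have : leftSet v = (Iio (v 0)).map v.symm.toEmbedding := by
    ext i
    simp [leftSet]
  rw [this, card_map, Fin.card_Iio]

lemma SinglePeaked.spValue_leftSet {v : Vote (m + 1)} (hv : SinglePeaked v) (i : Fin (m + 1)) :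
    spValue (leftSet v) i = v i := by
  have hp := card_leftSet v
  by_cases hi : v i < v 0
  · have : {j ∈ leftSet v | j ≤ i} = (Ico (v i) (v 0)).map v.symm.toEmbedding := by
      ext j
      simp only [leftSet, mem_filter, mem_univ, true_and, mem_map_equiv, Equiv.symm_symm, mem_Ico]
      exact (and_congr_right fun hj => hv.le_iff_le_of_le_peak hj.le hi.le).trans and_comm
    have hi' : i ∈ leftSet v := by simp [leftSet, hi]
    rw [spValue, if_pos hi', this, card_map, Fin.card_Ico, hp]
    rw [Fin.lt_def] at hi
    omega
  · have : {j ∈ (leftSet v)ᶜ | j ≤ i} = (Icc (v 0) (v i)).map v.symm.toEmbedding := by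
      ext j
      simp only [leftSet, mem_filter, mem_compl, mem_univ, true_and, mem_map_equiv,
        Equiv.symm_symm, mem_Icc, not_lt]
      exact and_congr_right fun hj => hv.le_iff_le_of_peak_le hj (not_lt.1 hi)
    have hi' : i ∉ leftSet v := by simp [leftSet, hi]
    rw [spValue, if_neg hi', this, card_map, Fin.card_Icc, hp]
    rw [Fin.lt_def] at hi
    omega

lemma SinglePeaked.spVote_leftSet {v : Vote (m + 1)} (hv : SinglePeaked v) :
    spVote ⟨leftSet v, zero_notMem_leftSet v⟩ = v :=
  Equiv.ext fun i => Fin.ext (hv.spValue_leftSet i)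

lemma card_finset_notMem {α : Type*} [Fintype α] [DecidableEq α] (a : α) :
    Nat.card {A : Finset α // a ∉ A} = 2 ^ (Fintype.card α - 1) := by
  rw [Nat.card_eq_fintype_card, Fintype.card_subtype]
  have : ({A | a ∉ A} : Finset (Finset α)) = (univ.erase a).powerset := by
    ext A
    simp [subset_erase]
  rw [this, card_powerset, card_erase_of_mem (mem_univ a), card_univ]

theorem ncard_singlePeaked (m : ℕ) : {v : Vote (m + 1) | SinglePeaked v}.ncard = 2 ^ m := by
  have hrange : {v : Vote (m + 1) | SinglePeaked v} = Set.range spVote :=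
    Set.ext fun v =>
      ⟨fun hv => ⟨_, hv.spVote_leftSet⟩, by rintro ⟨A, rfl⟩; exact singlePeaked_spVote A⟩
  have hinj : Function.Injective (spVote (m := m)) :=
    fun A B h => Subtype.ext (by rw [← leftSet_spVote A, h, leftSet_spVote])
  rw [hrange, Set.ncard_range_of_injective hinj, card_finset_notMem, Fintype.card_fin,
    Nat.add_sub_cancel]

end Counting

/-- (Black) The set of all single-peaked linear orders with respect to the
natural axis is a Condorcet domain of cardinality `2 ^ (n - 1)`. -/
theorem stmt14 {n : ℕ} (hn : 1 ≤ n) :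
    IsCondorcet {v : Vote n | SinglePeaked v} ∧
      {v : Vote n | SinglePeaked v}.ncard = 2 ^ (n - 1) := by
  refine ⟨isCondorcet_of_middleNeverLast fun v hv => SinglePeaked.middleNeverLast hv, ?_⟩
  obtain ⟨m, rfl⟩ := Nat.exists_eq_add_of_le' hn
  simpa using ncard_singlePeaked m
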